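/- For every k-coloring c of the plane and every real R > 1, |p^per(c̃_R) − p^table_R(c)| ≤ 8/R, where c̃_R is the periodic coloring obtained by restricting c to the square [−R, R]² and tiling the plane with this square (periods (2R, 0) and (0, 2R)). -/

import Mathlib

open MeasureTheory Real

noncomputable section

abbrev Plane := EuclideanSpace ℝ (Fin 2)

def vec (x y : ℝ) : Plane := (WithLp.equiv 2 (Fin 2 → ℝ)).symm ![x, y]

def dir (θ : ℝ) : Plane := vec (Real.cos θ) (Real.sin θ)

/-- The fundamental parallelogram `{t•u + s•v : 0 ≤ t, s < 1}`. -/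
def para (u v : Plane) : Set Plane :=
  {x | ∃ t s : ℝ, 0 ≤ t ∧ t < 1 ∧ 0 ≤ s ∧ s < 1 ∧ x = t • u + s • v}

/-- `p^per(c)` for a periodic coloring with fundamental parallelogram `para u v`. -/
def pper {k : ℕ} (c : Plane → Fin k) (u v : Plane) : ℝ :=
  (1 / (2 * π * (volume (para u v)).toReal)) *
    ∫ a in para u v, ∫ θ in (0:ℝ)..(2*π),
      (if c a = c (a + dir θ) then (1:ℝ) else 0)

/-- The square `[-R, R]²`. -/
def square (R : ℝ) : Set Plane := {x | x 0 ∈ Set.Icc (-R) R ∧ x 1 ∈ Set.Icc (-R) R}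

-- `p^table(c)` on the "table" `P`: the conditional probability that both endpoints of a
-- random needle have the same color, given that the second endpoint also lands in `P`.
open Classical in
def ptableSet {k : ℕ} (c : Plane → Fin k) (P : Set Plane) : ℝ :=
  (∫ a in P, ∫ θ in (0:ℝ)..(2*π),
      (if c a = c (a + dir θ) ∧ a + dir θ ∈ P then (1:ℝ) else 0)) /
  (∫ a in P, ∫ θ in (0:ℝ)..(2*π), (if a + dir θ ∈ P then (1:ℝ) else 0))

/-- `p^table_R(c)`, on the square table `[-R, R]²`. -/
def ptable {k : ℕ} (c : Plane → Fin k) (R : ℝ) : ℝ := ptableSet c (square R)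

/-- The half-open tile `[-R, R)²`. -/
def squareHalf (R : ℝ) : Set Plane :=
  {x | x 0 ∈ Set.Ico (-R) R ∧ x 1 ∈ Set.Ico (-R) R}

/-!
The tile `[-R, R)²` is a fundamental domain of the period lattice `(2Rℤ)²`, so the average of
`a ↦ ∫ θ, 1[c̃ a = c̃ (a + dir θ)]` over the parallelogram equals its average over the tile, and
both `p^per` and `p^table` become ratios of integrals over the tile. For `a` in the core
`[1 - R, R - 1)²` every needle from `a` stays in the tile, where `c̃ = c`: there the two
numerator integrands agree and the table's denominator integrand is `2π`. Only the boundary strip,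
of area `8R - 4`, contributes to the differences, so numerators and denominators differ by at most
`2π (8R - 4)`, and the two ratios by at most `(8R - 4) / (2R²) ≤ 8 / R`.
-/

open Submodule Function Set

theorem Function.Periodic.of_mem_span_int {E X : Type*} [AddCommGroup E] {f : E → X} {s : Set E}
    (h : ∀ p ∈ s, Periodic f p) {p : E} (hp : p ∈ span ℤ s) : Periodic f p := by
  induction hp using Submodule.span_induction with
  | mem p hp => exact h p hp
  | zero => exact fun x => by rw [add_zero]
  | add _ _ _ _ h₁ h₂ => exact h₁.add_period h₂
  | smul n _ _ h => exact h.zsmul n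

theorem ZSpan.measurable_fract {ι E : Type*} [Fintype ι] [NormedAddCommGroup E]
    [NormedSpace ℝ E] [FiniteDimensional ℝ E] [MeasurableSpace E] [BorelSpace E]
    (b : Module.Basis ι ℝ E) :
    Measurable (ZSpan.fract b) := by
  have : ZSpan.fract b = fun m => b.equivFun.symm fun i => Int.fract (b.equivFun m i) := by
    ext1 m
    apply b.equivFun.injective
    ext i
    rw [LinearEquiv.apply_symm_apply]
    simp
  rw [this]
  have hc : Continuous b.equivFun := LinearMap.continuous_of_finiteDimensional _
  have hc' : Continuous b.equivFun.symm := LinearMap.continuous_of_finiteDimensional _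
  exact hc'.measurable.comp (measurable_pi_lambda _ fun i =>
    ((measurable_pi_apply i).comp hc.measurable).fract)

theorem ite_one_zero_mem_Icc (p : Prop) [Decidable p] : (if p then (1:ℝ) else 0) ∈ Icc 0 1 := by
  split_ifs <;> simp

theorem intervalIntegral_mem_Icc_of_mem_Icc {g : ℝ → ℝ} {T : ℝ} (hT : 0 ≤ T)
    (hg : ∀ θ, g θ ∈ Icc 0 1) : ∫ θ in (0:ℝ)..T, g θ ∈ Icc 0 T := by
  refine ⟨intervalIntegral.integral_nonneg hT fun θ _ => (hg θ).1, ?_⟩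
  have := intervalIntegral.norm_integral_le_of_norm_le_const (a := 0) (b := T) (C := 1) (f := g)
    fun θ _ => by rw [Real.norm_of_nonneg (hg θ).1]; exact (hg θ).2
  rw [sub_zero, abs_of_nonneg hT, one_mul] at this
  exact (le_abs_self _).trans this

theorem Measurable.intervalIntegrable_of_mem_Icc {g : ℝ → ℝ} (hg : Measurable g)
    (h01 : ∀ θ, g θ ∈ Icc 0 1) (a b : ℝ) : IntervalIntegrable g volume a b :=
  (intervalIntegrable_const (c := (1 : ℝ))).mono_fun hg.aestronglyMeasurable
    (ae_of_all _ fun θ => by simpa [abs_of_nonneg (h01 θ).1] using (h01 θ).2)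

theorem measurable_intervalIntegral_of_uncurry {X : Type*} [MeasurableSpace X]
    {f : X → ℝ → ℝ} (hf : Measurable (uncurry f)) (a b : ℝ) :
    Measurable fun x => ∫ θ in a..b, f x θ := by
  simp only [intervalIntegral]
  exact (hf.stronglyMeasurable.integral_prod_right.measurable).sub
    hf.stronglyMeasurable.integral_prod_right.measurable

theorem Measurable.integrableOn_of_mem_Icc {α : Type*} [MeasurableSpace α] {μ : Measure α}
    {f : α → ℝ} {s : Set α} {T : ℝ} (hf : Measurable f) (hfT : ∀ x, f x ∈ Icc 0 T)
    (hs : μ s ≠ ⊤) : IntegrableOn f s μ :=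
  Measure.integrableOn_of_bounded hs hf.aestronglyMeasurable (M := T)
    (ae_of_all _ fun x => by rw [Real.norm_of_nonneg (hfT x).1]; exact (hfT x).2)

theorem abs_setIntegral_sub_setIntegral_le {α : Type*} [MeasurableSpace α] {μ : Measure α}
    {f g : α → ℝ} {s t : Set α} {B : ℝ} (hs : MeasurableSet s) (hμ : μ s ≠ ⊤)
    (hf : IntegrableOn f s μ) (hg : IntegrableOn g s μ) (heq : EqOn f g t)
    (hB : ∀ x ∈ s, |f x - g x| ≤ B) :
    |∫ x in s, f x ∂μ - ∫ x in s, g x ∂μ| ≤ B * μ.real (s \ t) := by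
  rw [← integral_sub hf hg, setIntegral_eq_of_subset_of_forall_sdiff_eq_zero hs sdiff_subset
    fun x hx => sub_eq_zero.2 (heq (not_not.1 (not_and.1 hx.2 hx.1)))]
  exact norm_setIntegral_le_of_norm_le_const ((measure_mono sdiff_subset).trans_lt hμ.lt_top)
    fun x hx => (Real.norm_eq_abs _).trans_le (hB x hx.1)

theorem abs_one_div_mul_sub_div_le {I N M D δ : ℝ} (hD : 0 < D) (hM : 0 < M)
    (hIN : |I - N| ≤ δ) (hN : 0 ≤ N) (hNM : N ≤ M) (hDM : D - δ ≤ M) (hMD : M ≤ D) :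
    |1 / D * I - N / M| ≤ 2 * δ / D := by
  have hratio : |N / M| ≤ 1 := by
    rw [abs_of_nonneg (div_nonneg hN hM.le)]; exact div_le_one_of_le₀ hNM hM.le
  have hdist : |M - D| ≤ δ := abs_le.2 ⟨by linarith, by linarith [(abs_nonneg _).trans hIN]⟩
  have e : 1 / D * I - N / M = (I - N + N / M * (M - D)) / D := by
    field_simp
    ring
  rw [e, abs_div, abs_of_pos hD]
  gcongr
  calc |I - N + N / M * (M - D)| ≤ |I - N| + |N / M| * |M - D| := by
        rw [← abs_mul]; exact abs_add_le _ _
    _ ≤ δ + 1 * δ := by gcongr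
    _ = 2 * δ := by ring

theorem squareHalf_eq_preimage (r : ℝ) :
    squareHalf r =
      (MeasurableEquiv.toLp 2 (Fin 2 → ℝ)).symm ⁻¹' univ.pi fun _ => Ico (-r) r := by
  ext x
  simp [squareHalf, Fin.forall_fin_two]

theorem square_eq_preimage (r : ℝ) :
    square r =
      (MeasurableEquiv.toLp 2 (Fin 2 → ℝ)).symm ⁻¹' Icc (fun _ => -r) fun _ => r := by
  ext x
  simp [square, Pi.le_def, Fin.forall_fin_two]
  tauto

theorem measurableSet_squareHalf (r : ℝ) : MeasurableSet (squareHalf r) := by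
  rw [squareHalf_eq_preimage]
  exact (MeasurableSet.univ_pi fun _ => measurableSet_Ico).preimage (MeasurableEquiv.measurable _)

theorem measurableSet_square (r : ℝ) : MeasurableSet (square r) := by
  rw [square_eq_preimage]
  exact measurableSet_Icc.preimage (MeasurableEquiv.measurable _)

theorem squareHalf_mono {r r' : ℝ} (h : r ≤ r') : squareHalf r ⊆ squareHalf r' := by
  rintro x ⟨⟨h₀, h₀'⟩, h₁, h₁'⟩
  exact ⟨⟨by linarith, by linarith⟩, by linarith, by linarith⟩

theorem squareHalf_subset_square (r : ℝ) : squareHalf r ⊆ square r :=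
  fun _ ⟨h₀, h₁⟩ => ⟨Ico_subset_Icc_self h₀, Ico_subset_Icc_self h₁⟩

theorem volume_squareHalf (r : ℝ) : volume (squareHalf r) = ENNReal.ofReal (2 * r) ^ 2 := by
  rw [squareHalf_eq_preimage,
    (EuclideanSpace.volume_preserving_symm_measurableEquiv_toLp (Fin 2)).measure_preimage
      (MeasurableSet.univ_pi fun _ => measurableSet_Ico).nullMeasurableSet, volume_pi_pi]
  simp [two_mul]

theorem volume_squareHalf_ne_top (r : ℝ) : volume (squareHalf r) ≠ ⊤ := by
  rw [volume_squareHalf]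
  exact ENNReal.pow_ne_top ENNReal.ofReal_ne_top

theorem measureReal_squareHalf {r : ℝ} (hr : 0 ≤ r) :
    volume.real (squareHalf r) = (2 * r) ^ 2 := by
  rw [measureReal_def, volume_squareHalf, ENNReal.toReal_pow, ENNReal.toReal_ofReal (by positivity)]

theorem measureReal_squareHalf_sdiff {R : ℝ} (hR : 1 ≤ R) :
    volume.real (squareHalf R \ squareHalf (R - 1)) = 8 * R - 4 := by
  rw [measureReal_sdiff (squareHalf_mono (by linarith)) (measurableSet_squareHalf _)
    (volume_squareHalf_ne_top R), measureReal_squareHalf (by linarith),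
    measureReal_squareHalf (by linarith)]
  ring

theorem square_ae_eq_squareHalf (r : ℝ) : square r =ᵐ[volume] squareHalf r := by
  rw [square_eq_preimage, squareHalf_eq_preimage]
  exact (EuclideanSpace.volume_preserving_symm_measurableEquiv_toLp
    (Fin 2)).quasiMeasurePreserving.preimage_ae_eq Measure.univ_pi_Ico_ae_eq_Icc.symm

theorem measurable_dir : Measurable dir := by
  unfold dir vec
  simp only [WithLp.equiv_symm_apply]
  fun_prop

theorem measurable_add_dir : Measurable fun p : Plane × ℝ => p.1 + dir p.2 :=
  measurable_fst.add (measurable_dir.comp measurable_snd)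

theorem add_dir_mem_squareHalf {r : ℝ} {a : Plane} (ha : a ∈ squareHalf (r - 1)) (θ : ℝ) :
    a + dir θ ∈ squareHalf r := by
  obtain ⟨⟨h₀, h₀'⟩, h₁, h₁'⟩ := ha
  have := neg_one_le_cos θ; have := cos_le_one θ
  have := neg_one_le_sin θ; have := sin_le_one θ
  refine ⟨⟨?_, ?_⟩, ?_, ?_⟩ <;> simp [dir, vec] <;> linarith

theorem para_eq_fundamentalDomain (b : Module.Basis (Fin 2) ℝ Plane) :
    para (b 0) (b 1) = ZSpan.fundamentalDomain b := by
  ext x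
  simp only [para, ZSpan.mem_fundamentalDomain, Fin.forall_fin_two, mem_ofPred_eq]
  constructor
  · rintro ⟨t, s, ht₀, ht₁, hs₀, hs₁, rfl⟩
    simp [ht₀, ht₁, hs₀, hs₁]
  · intro h
    refine ⟨b.repr x 0, b.repr x 1, h.1.1, h.1.2, h.2.1, h.2.2, ?_⟩
    conv_lhs => rw [← b.sum_repr x]
    rw [Fin.sum_univ_two]

def squareBasis {R : ℝ} (hR : 0 < R) : Module.Basis (Fin 2) ℝ Plane :=
  (EuclideanSpace.basisFun (Fin 2) ℝ).toBasis.unitsSMul fun _ => Units.mk0 (2 * R) (by positivity)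

theorem squareBasis_repr {R : ℝ} (hR : 0 < R) (x : Plane) (i : Fin 2) :
    (squareBasis hR).repr x i = (2 * R)⁻¹ * x i := by
  rw [squareBasis, Module.Basis.repr_unitsSMul, Units.smul_def, Units.val_inv_eq_inv_val,
    Units.val_mk0]
  simp

theorem squareBasis_apply {R : ℝ} (hR : 0 < R) (i : Fin 2) :
    squareBasis hR i = (2 * R) • EuclideanSpace.single i 1 := by
  rw [squareBasis, Module.Basis.unitsSMul_apply, Units.smul_def, Units.val_mk0]
  simp

theorem squareBasis_zero {R : ℝ} (hR : 0 < R) : squareBasis hR 0 = vec (2 * R) 0 := by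
  ext i; fin_cases i <;> simp [squareBasis_apply, vec]

theorem squareBasis_one {R : ℝ} (hR : 0 < R) : squareBasis hR 1 = vec 0 (2 * R) := by
  ext i; fin_cases i <;> simp [squareBasis_apply, vec]

open scoped Pointwise in
theorem squareHalf_eq_vadd_fundamentalDomain {R : ℝ} (hR : 0 < R) :
    squareHalf R = (-vec R R) +ᵥ ZSpan.fundamentalDomain (squareBasis hR) := by
  ext x
  simp only [mem_vadd_set_iff_neg_vadd_mem, neg_neg, ZSpan.mem_fundamentalDomain, squareBasis_repr,
    Fin.forall_fin_two, squareHalf, mem_ofPred_eq, vadd_eq_add]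
  have key (t : ℝ) : t ∈ Ico (-R) R ↔ (2 * R)⁻¹ * (R + t) ∈ Ico 0 1 := by
    simp only [mem_Ico, inv_mul_eq_div, le_div_iff₀ (by positivity : (0 : ℝ) < 2 * R),
      div_lt_iff₀ (by positivity : (0 : ℝ) < 2 * R)]
    constructor <;> rintro ⟨_, _⟩ <;> constructor <;> linarith
  exact and_congr (key _) (key _)

theorem isAddFundamentalDomain_squareHalf {R : ℝ} (hR : 0 < R) :
    IsAddFundamentalDomain (span ℤ (range (squareBasis hR))).toAddSubgroup (squareHalf R)
      volume := by
  rw [squareHalf_eq_vadd_fundamentalDomain hR]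
  exact (ZSpan.isAddFundamentalDomain' _ volume).vadd_of_comm _

section Tiling

variable {k : ℕ} {R : ℝ} {c ctilde : Plane → Fin k}

theorem periodic_of_mem_span_squareBasis (hR : 0 < R)
    (hper : ∀ x : Plane, ctilde (x + vec (2*R) 0) = ctilde x ∧
      ctilde (x + vec 0 (2*R)) = ctilde x)
    {p : Plane} (hp : p ∈ span ℤ (range (squareBasis hR))) : Periodic ctilde p := by
  refine Periodic.of_mem_span_int ?_ hp
  rintro _ ⟨i, rfl⟩ x
  fin_cases i
  · simpa [squareBasis_zero] using (hper x).1
  · simpa [squareBasis_one] using (hper x).2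

open scoped Pointwise in
theorem measurable_of_periodic_of_eqOn_squareHalf (hR : 0 < R) (hc : Measurable c)
    (hper : ∀ x : Plane, ctilde (x + vec (2*R) 0) = ctilde x ∧
      ctilde (x + vec 0 (2*R)) = ctilde x)
    (hagree : ∀ x ∈ squareHalf R, ctilde x = c x) : Measurable ctilde := by
  set b := squareBasis hR
  have hfold : ctilde = fun x => c (ZSpan.fract b (x + vec R R) - vec R R) := by
    ext1 x
    rw [← hagree]
    · have hx : ZSpan.fract b (x + vec R R) - vec R R = x + -↑(ZSpan.floor b (x + vec R R)) := by
        rw [ZSpan.fract_apply]; abel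
      rw [hx, periodic_of_mem_span_squareBasis hR hper (neg_mem (ZSpan.floor b _).2)]
    · rw [squareHalf_eq_vadd_fundamentalDomain hR, mem_vadd_set_iff_neg_vadd_mem, neg_neg,
        vadd_eq_add, add_sub_cancel]
      exact ZSpan.fract_mem_fundamentalDomain b _
  rw [hfold]
  exact hc.comp (((ZSpan.measurable_fract b).comp (measurable_add_const _)).sub_const _)

end Tiling

section Needle

variable {k : ℕ}

def sameColorAngle (c : Plane → Fin k) (a : Plane) : ℝ :=
  ∫ θ in (0:ℝ)..(2*π), if c a = c (a + dir θ) then (1:ℝ) else 0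

open Classical in
def sameColorAngleIn (c : Plane → Fin k) (P : Set Plane) (a : Plane) : ℝ :=
  ∫ θ in (0:ℝ)..(2*π), if c a = c (a + dir θ) ∧ a + dir θ ∈ P then (1:ℝ) else 0

open Classical in
def landingAngle (P : Set Plane) (a : Plane) : ℝ :=
  ∫ θ in (0:ℝ)..(2*π), if a + dir θ ∈ P then (1:ℝ) else 0

theorem pper_eq (c : Plane → Fin k) (u v : Plane) :
    pper c u v =
      1 / (2 * π * (volume (para u v)).toReal) * ∫ a in para u v, sameColorAngle c a :=
  rfl

theorem sameColorAngle_mem_Icc (c : Plane → Fin k) (a : Plane) :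
    sameColorAngle c a ∈ Icc 0 (2 * π) :=
  intervalIntegral_mem_Icc_of_mem_Icc two_pi_pos.le fun _ => ite_one_zero_mem_Icc _

open Classical in
theorem sameColorAngleIn_mem_Icc (c : Plane → Fin k) (P : Set Plane) (a : Plane) :
    sameColorAngleIn c P a ∈ Icc 0 (2 * π) :=
  intervalIntegral_mem_Icc_of_mem_Icc two_pi_pos.le fun _ => ite_one_zero_mem_Icc _

open Classical in
theorem landingAngle_mem_Icc (P : Set Plane) (a : Plane) : landingAngle P a ∈ Icc 0 (2 * π) :=
  intervalIntegral_mem_Icc_of_mem_Icc two_pi_pos.le fun _ => ite_one_zero_mem_Icc _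

variable {c : Plane → Fin k} {P : Set Plane}

theorem measurable_sameColorAngle (hc : Measurable c) : Measurable (sameColorAngle c) :=
  measurable_intervalIntegral_of_uncurry (Measurable.ite
    (measurableSet_eq_fun (hc.comp measurable_fst) (hc.comp measurable_add_dir))
    measurable_const measurable_const) _ _

open Classical in
theorem measurable_uncurry_sameColorIn (hc : Measurable c) (hP : MeasurableSet P) :
    Measurable (uncurry fun a θ =>
      if c a = c (a + dir θ) ∧ a + dir θ ∈ P then (1:ℝ) else 0) :=
  Measurable.ite ((measurableSet_eq_fun (hc.comp measurable_fst) (hc.comp measurable_add_dir)).inter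
    (measurable_add_dir hP)) measurable_const measurable_const

open Classical in
theorem measurable_uncurry_landing (hP : MeasurableSet P) :
    Measurable (uncurry fun a θ => if a + dir θ ∈ P then (1:ℝ) else 0) :=
  Measurable.ite (measurable_add_dir hP) measurable_const measurable_const

theorem measurable_sameColorAngleIn (hc : Measurable c) (hP : MeasurableSet P) :
    Measurable (sameColorAngleIn c P) :=
  measurable_intervalIntegral_of_uncurry (measurable_uncurry_sameColorIn hc hP) _ _

theorem measurable_landingAngle (hP : MeasurableSet P) : Measurable (landingAngle P) :=
  measurable_intervalIntegral_of_uncurry (measurable_uncurry_landing hP) _ _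

open Classical in
theorem sameColorAngleIn_le_landingAngle (hc : Measurable c) (hP : MeasurableSet P) (a : Plane) :
    sameColorAngleIn c P a ≤ landingAngle P a := by
  refine intervalIntegral.integral_mono_on two_pi_pos.le
    (((measurable_uncurry_sameColorIn hc hP).comp
      measurable_prodMk_left).intervalIntegrable_of_mem_Icc (fun _ => ite_one_zero_mem_Icc _) _ _)
    (((measurable_uncurry_landing hP).comp
      measurable_prodMk_left).intervalIntegrable_of_mem_Icc (fun _ => ite_one_zero_mem_Icc _) _ _)
    fun θ _ => ?_
  split_ifs <;> simp_all

theorem Function.Periodic.sameColorAngle {p : Plane} (h : Periodic c p) :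
    Periodic (sameColorAngle c) p := by
  intro a
  simp only [_root_.sameColorAngle, add_right_comm _ p, show ∀ x, c (x + p) = c x from h]

theorem sameColorAngle_eq_sameColorAngleIn {c' : Plane → Fin k} {R : ℝ}
    (hagree : ∀ x ∈ squareHalf R, c' x = c x) {a : Plane} (ha : a ∈ squareHalf (R - 1)) :
    sameColorAngle c' a = sameColorAngleIn c (square R) a := by
  refine intervalIntegral.integral_congr fun θ _ => ?_
  have hθ := add_dir_mem_squareHalf ha θ
  simp only [hagree a (squareHalf_mono (by linarith) ha), hagree _ hθ,
    squareHalf_subset_square R hθ, and_true]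

theorem landingAngle_eq_two_pi {R : ℝ} {a : Plane} (ha : a ∈ squareHalf (R - 1)) :
    landingAngle (square R) a = 2 * π := by
  simp [landingAngle, squareHalf_subset_square R (add_dir_mem_squareHalf ha _)]

end Needle

section Table

variable {k : ℕ} {R : ℝ} {c ctilde : Plane → Fin k}

theorem pper_eq_squareHalf (hR : 0 < R)
    (hper : ∀ x : Plane, ctilde (x + vec (2*R) 0) = ctilde x ∧
      ctilde (x + vec 0 (2*R)) = ctilde x) :
    pper ctilde (vec (2*R) 0) (vec 0 (2*R)) =
      1 / (2 * π * (2 * R) ^ 2) * ∫ a in squareHalf R, sameColorAngle ctilde a := by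
  have hfd := ZSpan.isAddFundamentalDomain' (squareBasis hR) volume
  have hsq := isAddFundamentalDomain_squareHalf hR
  -- `toAddSubgroup` hides the `Countable` instance of the lattice
  have : Countable (span ℤ (range (squareBasis hR))).toAddSubgroup :=
    inferInstanceAs (Countable (span ℤ (range (squareBasis hR))))
  rw [pper_eq, ← squareBasis_zero hR, ← squareBasis_one hR, para_eq_fundamentalDomain,
    hfd.measure_eq hsq, hfd.setIntegral_eq hsq fun p a => ?_, ← measureReal_def,
    measureReal_squareHalf hR.le]
  rw [Submodule.vadd_def, vadd_eq_add, add_comm]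
  exact (periodic_of_mem_span_squareBasis hR hper p.2).sameColorAngle a

theorem ptable_eq_squareHalf :
    ptable c R = (∫ a in squareHalf R, sameColorAngleIn c (square R) a) /
      ∫ a in squareHalf R, landingAngle (square R) a := by
  rw [← setIntegral_congr_set (square_ae_eq_squareHalf R),
    ← setIntegral_congr_set (square_ae_eq_squareHalf R)]
  rfl

theorem abs_integral_sameColorAngle_sub_le (hR : 1 ≤ R) (hc : Measurable c)
    (hct : Measurable ctilde) (hagree : ∀ x ∈ squareHalf R, ctilde x = c x) :
    |(∫ a in squareHalf R, sameColorAngle ctilde a) -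
      ∫ a in squareHalf R, sameColorAngleIn c (square R) a| ≤ 2 * π * (8 * R - 4) := by
  rw [← measureReal_squareHalf_sdiff hR]
  exact abs_setIntegral_sub_setIntegral_le (measurableSet_squareHalf R)
    (volume_squareHalf_ne_top R)
    ((measurable_sameColorAngle hct).integrableOn_of_mem_Icc (sameColorAngle_mem_Icc _)
      (volume_squareHalf_ne_top R))
    ((measurable_sameColorAngleIn hc (measurableSet_square R)).integrableOn_of_mem_Icc
      (sameColorAngleIn_mem_Icc _ _) (volume_squareHalf_ne_top R))
    (fun a ha => sameColorAngle_eq_sameColorAngleIn hagree ha)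
    fun a _ => abs_sub_le_of_nonneg_of_le (sameColorAngle_mem_Icc _ a).1
      (sameColorAngle_mem_Icc _ a).2 (sameColorAngleIn_mem_Icc _ _ a).1
      (sameColorAngleIn_mem_Icc _ _ a).2

theorem integral_landingAngle_mem_Icc (hR : 1 ≤ R) :
    ∫ a in squareHalf R, landingAngle (square R) a ∈
      Icc (2 * π * (2 * R - 2) ^ 2) (2 * π * (2 * R) ^ 2) := by
  have hint := (measurable_landingAngle (measurableSet_square R)).integrableOn_of_mem_Icc
    (landingAngle_mem_Icc _) (volume_squareHalf_ne_top R)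
  constructor
  · calc 2 * π * (2 * R - 2) ^ 2 = ∫ a in squareHalf (R - 1), landingAngle (square R) a := by
          rw [setIntegral_congr_fun (measurableSet_squareHalf _)
            fun a ha => landingAngle_eq_two_pi ha, setIntegral_const,
            measureReal_squareHalf (by linarith), smul_eq_mul]
          ring
      _ ≤ _ := setIntegral_mono_set hint (ae_of_all _ fun a => (landingAngle_mem_Icc _ a).1)
          (squareHalf_mono (by linarith)).eventuallyLE
  · calc _ ≤ ∫ _ in squareHalf R, 2 * π :=
          setIntegral_mono_on hint (integrableOn_const (volume_squareHalf_ne_top R))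
            (measurableSet_squareHalf R) fun a _ => (landingAngle_mem_Icc _ a).2
      _ = _ := by
          rw [setIntegral_const, measureReal_squareHalf (by linarith), smul_eq_mul]
          ring

theorem integral_sameColorAngleIn_mem_Icc (hc : Measurable c) :
    ∫ a in squareHalf R, sameColorAngleIn c (square R) a ∈
      Icc 0 (∫ a in squareHalf R, landingAngle (square R) a) :=
  ⟨setIntegral_nonneg (measurableSet_squareHalf R) fun a _ => (sameColorAngleIn_mem_Icc _ _ a).1,
    setIntegral_mono_on
      ((measurable_sameColorAngleIn hc (measurableSet_square R)).integrableOn_of_mem_Icc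
        (sameColorAngleIn_mem_Icc _ _) (volume_squareHalf_ne_top R))
      ((measurable_landingAngle (measurableSet_square R)).integrableOn_of_mem_Icc
        (landingAngle_mem_Icc _) (volume_squareHalf_ne_top R))
      (measurableSet_squareHalf R)
      fun a _ => sameColorAngleIn_le_landingAngle hc (measurableSet_square R) a⟩

end Table

/-- For any `k`-coloring `c` of the plane and `R > 1`, the periodic coloring `c̃_R`
obtained by tiling the plane with `c` restricted to the square tile (periods `(2R, 0)`
and `(0, 2R)`) satisfies `|p^per(c̃_R) − p^table_R(c)| ≤ 8/R`. -/
theorem stmt17 (k : ℕ) (c : Plane → Fin k) (hc : Measurable c) (R : ℝ) (hR : 1 < R)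
    (ctilde : Plane → Fin k)
    (hper : ∀ x : Plane, ctilde (x + vec (2*R) 0) = ctilde x ∧
      ctilde (x + vec 0 (2*R)) = ctilde x)
    (hagree : ∀ x ∈ squareHalf R, ctilde x = c x) :
    |pper ctilde (vec (2*R) 0) (vec 0 (2*R)) - ptable c R| ≤ 8 / R := by
  have hR0 : 0 < R := by linarith
  have hct := measurable_of_periodic_of_eqOn_squareHalf hR0 hc hper hagree
  have hM := integral_landingAngle_mem_Icc (R := R) hR.le
  have hN := integral_sameColorAngleIn_mem_Icc (R := R) hc
  have hcore : 0 < 2 * π * (2 * R - 2) ^ 2 := by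
    have : 0 < 2 * R - 2 := by linarith
    positivity
  rw [pper_eq_squareHalf hR0 hper, ptable_eq_squareHalf]
  refine (abs_one_div_mul_sub_div_le (by positivity) (hcore.trans_le hM.1)
    (abs_integral_sameColorAngle_sub_le hR.le hc hct hagree) hN.1 hN.2 (by linarith [hM.1])
    hM.2).trans ?_
  rw [div_le_div_iff₀ (by positivity) hR0]
  nlinarith [pi_pos]

end
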